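/- arXiv:2212.14222 — 5 statements merged into one kernel-verified Lean document; each statement's English description precedes it below -/
import Mathlib

section
/- Let [K] and [K'] be two naturally oriented n-simplices in ℝ^n (i.e. oriented so that the determinant of edge vectors from the first vertex is positive) that share a common facet but have disjoint interiors. Then [K] and [K'] are consistently oriented. -/
/-!
Let `A = K.vert i` be the apex of `K` opposite the common facet and `σ` the reordering matching
the facet of `K` with that of `K'`. Because the interiors are disjoint, the barycentric coordinate
`c` of `A` with respect to the vertex `K'.vert i'` opposite the facet is negative: otherwise points
near the centroid of the facet, pushed slightly towards `A`, would lie in both interiors.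
Replacing `K'.vert i'` by `A` multiplies the augmented determinant `det [(1, V_r)]` by `c` and
turns `K'.vert` into a reordering of `K.vert` of sign `(-1)^i sign σ (-1)^i'`. As both simplices
are naturally oriented and `c < 0`, this is exactly the sign relation making the induced
orientations on the facet opposite.
-/

/-- An oriented abstract simplex: a tuple of vertices together with a sign. Two such data
represent the same orientation when they differ by an even permutation (and equal signs),
or by an odd permutation and opposite signs. -/
structure OSimplex (V : Type*) (d : ℕ) where
  vert : Fin (d + 1) → V
  sign : ℤˣ

namespace OSimplex

variable {V : Type*} {d : ℕ}

/-- `s` and `t` define the same oriented simplex. -/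
def Equiv' (s t : OSimplex V d) : Prop :=
  ∃ σ : Equiv.Perm (Fin (d + 1)), s.vert = t.vert ∘ σ ∧ s.sign = Equiv.Perm.sign σ * t.sign

/-- The oppositely oriented simplex. -/
def opp (s : OSimplex V d) : OSimplex V d := ⟨s.vert, -s.sign⟩

/-- The oriented facet of `s` obtained by deleting the vertex in position `j`,
with the induced orientation `(-1)^j [V_0,…,V̂_j,…,V_{d+1}]`. -/
def facet (s : OSimplex V (d + 1)) (j : Fin (d + 2)) : OSimplex V d :=
  ⟨s.vert ∘ j.succAbove, (-1 : ℤˣ) ^ (j : ℕ) * s.sign⟩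

/-- `s` and `t` induce opposite orientations on their common facet with vertex set `F`. -/
def ConsistentAt (s t : OSimplex V (d + 1)) (F : Set V) : Prop :=
  ∃ j j' : Fin (d + 2), Set.range (s.facet j).vert = F ∧ Set.range (t.facet j').vert = F ∧
    (s.facet j).Equiv' ((t.facet j').opp)

/-- `s` and `t` are consistently oriented: they induce opposite orientations on a common
facet. -/
def Consistent (s t : OSimplex V (d + 1)) : Prop := ∃ F : Set V, ConsistentAt s t F

end OSimplex
/-- The natural orientation of an `n`-simplex in `ℝ^n`: the sign matches the sign of the
determinant of the edge vectors issued from the first vertex. -/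
def NaturallyOriented {n : ℕ} (s : OSimplex (Fin (n + 1) → ℝ) (n + 1)) : Prop :=
  0 < ((s.sign : ℤ) : ℝ) *
    Matrix.det (Matrix.of fun i j : Fin (n + 1) => (s.vert i.succ - s.vert 0) j)


open Matrix Equiv Set Finset Filter Topology

section AugmentedDet

variable {R : Type*} [CommRing R] {n : ℕ}

noncomputable def augmentedDet (u : Fin (n + 1) → Fin n → R) : R :=
  (Matrix.of fun r => Fin.cons (1 : R) (u r)).det

theorem augmentedDet_comp_perm (u : Fin (n + 1) → Fin n → R) (σ : Perm (Fin (n + 1))) :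
    augmentedDet (u ∘ σ) = Perm.sign σ * augmentedDet u :=
  det_permute σ (Matrix.of fun r => Fin.cons (1 : R) (u r))

theorem augmentedDet_eq_det_sub (u : Fin (n + 1) → Fin n → R) :
    augmentedDet u = (Matrix.of fun i j : Fin n => (u i.succ - u 0) j).det := by
  set B : Matrix (Fin (n + 1)) (Fin (n + 1)) R :=
    Matrix.of (Fin.cons (Fin.cons 1 (u 0)) fun i => Fin.cons 0 (u i.succ - u 0))
  -- subtracting the first row from the others leaves a first column `(1, 0, …, 0)`
  have hB : augmentedDet u = B.det := by
    refine det_eq_of_forall_row_eq_smul_add_const (fun i => if i = 0 then 0 else 1) 0 ?_ ?_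
    · simp
    intro i j
    refine Fin.cases ?_ (fun i => ?_) i <;> refine Fin.cases ?_ (fun j => ?_) j <;>
      simp [B, Fin.succ_ne_zero]
  rw [hB, det_succ_column_zero, Fin.sum_univ_succ]
  simp [B]
  rfl

theorem augmentedDet_cons_removeNth (u : Fin (n + 1) → Fin n → R) (i : Fin (n + 1)) :
    augmentedDet (Fin.cons (u i) (i.removeNth u)) = (-1) ^ (i : ℕ) * augmentedDet u := by
  rw [Fin.cons_removeNth_eq_comp_cycleRange_symm, augmentedDet_comp_perm, Perm.sign_symm,
    Fin.sign_cycleRange]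
  push_cast
  rfl

theorem augmentedDet_cons_comp_perm (a : Fin n → R) (w : Fin n → Fin n → R)
    (σ : Perm (Fin n)) :
    augmentedDet (Fin.cons a (w ∘ σ)) = Perm.sign σ * augmentedDet (Fin.cons a w) := by
  have h : Fin.cons a (w ∘ σ) = Fin.cons a w ∘ Perm.decomposeFin.symm (0, σ) := by
    funext k
    refine Fin.cases ?_ (fun k => ?_) k <;> simp [Perm.decomposeFin_symm_apply_succ]
  rw [h, augmentedDet_comp_perm, Perm.decomposeFin.symm_sign]
  simp

theorem neg_one_pow_mul_augmentedDet_eq {u v : Fin (n + 1) → Fin n → R} {i j : Fin (n + 1)}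
    {σ : Perm (Fin n)} (hapex : u i = v j)
    (hfacet : u ∘ i.succAbove = v ∘ j.succAbove ∘ σ) :
    (-1) ^ (i : ℕ) * augmentedDet u = Perm.sign σ * ((-1) ^ (j : ℕ) * augmentedDet v) := by
  rw [← augmentedDet_cons_removeNth, ← augmentedDet_cons_removeNth,
    ← augmentedDet_cons_comp_perm, hapex]
  exact congrArg (fun w => augmentedDet (Fin.cons (v j) w)) hfacet

theorem AffineBasis.augmentedDet_update (b : AffineBasis (Fin (n + 1)) R (Fin n → R))
    (i : Fin (n + 1)) (x : Fin n → R) :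
    augmentedDet (Function.update b i x) = b.coord i x * augmentedDet b := by
  set M : Matrix (Fin (n + 1)) (Fin (n + 1)) R := Matrix.of fun r => Fin.cons (1 : R) (b r)
  have hrow : (Matrix.of fun r => Fin.cons (1 : R) (Function.update b i x r)) =
      M.updateRow i (Fin.cons 1 x) := by
    funext r c
    by_cases h : r = i
    · subst h; simp [M]
    · simp [M, updateRow_ne h, Function.update_of_ne h]
  -- the row `(1, x)` is the combination of the rows `(1, b j)` with barycentric weights
  have hx : Fin.cons (1 : R) x = ∑ j, b.coord j x • M j := by
    funext c
    rw [Finset.sum_apply]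
    refine Fin.cases ?_ (fun c => ?_) c
    · simp [M, b.sum_coord_apply_eq_one x]
    · have h := congrFun (b.linear_combination_coord_eq_self x) c
      rw [Finset.sum_apply] at h
      simpa [M] using h.symm
  rw [augmentedDet, hrow, hx, det_updateRow_sum]
  rfl

end AugmentedDet

theorem eventually_lineMap_pos {a c : ℝ} (h : 0 < a ∨ a = 0 ∧ 0 < c) :
    ∀ᶠ ε in 𝓝[>] (0 : ℝ), 0 < AffineMap.lineMap a c ε := by
  rcases h with ha | ⟨rfl, hc⟩
  · have hcont : Continuous fun ε : ℝ => AffineMap.lineMap a c ε := by fun_prop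
    have := hcont.tendsto 0
    rw [AffineMap.lineMap_apply_zero] at this
    exact (this.eventually_const_lt ha).filter_mono nhdsWithin_le_nhds
  · filter_upwards [self_mem_nhdsWithin] with ε (hε : 0 < ε)
    simpa [AffineMap.lineMap_apply_module] using mul_pos hε hc

namespace AffineBasis

variable {ι E : Type*} [NormedAddCommGroup E] [NormedSpace ℝ E]

theorem eventually_lineMap_centroid_erase_mem_interior [Fintype ι] [DecidableEq ι] [Nontrivial ι]
    (b : AffineBasis ι ℝ E) {i : ι} {x : E} (hx : 0 < b.coord i x) :
    ∀ᶠ ε in 𝓝[>] (0 : ℝ), AffineMap.lineMap ((univ.erase i).centroid ℝ b) x ε ∈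
      interior (convexHull ℝ (range b)) := by
  simp only [b.interior_convexHull, mem_ofPred_eq, eventually_all, AffineMap.apply_lineMap]
  intro j
  apply eventually_lineMap_pos
  rcases eq_or_ne j i with rfl | hji
  · obtain ⟨k, hk⟩ := exists_ne j
    refine Or.inr ⟨?_, hx⟩
    exact b.coord_apply_combination_of_notMem (notMem_erase j univ)
      (sum_centroidWeights_eq_one_of_nonempty ℝ _ ⟨k, mem_erase.2 ⟨hk, mem_univ k⟩⟩)
  · refine Or.inl ?_
    rw [b.coord_apply_centroid (mem_erase.2 ⟨hji, mem_univ j⟩)]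
    exact inv_pos.2 (Nat.cast_pos.2 (card_pos.2 ⟨j, mem_erase.2 ⟨hji, mem_univ j⟩⟩))

variable {b b' : AffineBasis ι ℝ E} {i i' : ι}

theorem coord_apply_ne_zero_of_image_compl_eq (hfacet : b '' {i}ᶜ = b' '' {i'}ᶜ) :
    b'.coord i' (b i) ≠ 0 := by
  intro h0
  have hzero : b'.coord i' = AffineMap.const ℝ E (0 : ℝ) := by
    refine AffineMap.ext_on b.tot ?_
    rintro - ⟨j, rfl⟩
    rcases eq_or_ne j i with rfl | hji
    · exact h0
    · obtain ⟨k, hk, hkj⟩ : b j ∈ b' '' {i'}ᶜ := hfacet ▸ ⟨j, hji, rfl⟩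
      rw [← hkj]
      exact b'.coord_apply_ne (Ne.symm hk)
  simpa [b'.coord_apply_eq] using congr($hzero (b' i'))

theorem coord_apply_neg_of_image_compl_eq [Fintype ι] [DecidableEq ι] [Nontrivial ι]
    (hfacet : b '' {i}ᶜ = b' '' {i'}ᶜ)
    (hdisj : interior (convexHull ℝ (range b)) ∩ interior (convexHull ℝ (range b')) = ∅) :
    b'.coord i' (b i) < 0 := by
  refine lt_of_le_of_ne (not_lt.1 fun hpos => ?_) (coord_apply_ne_zero_of_image_compl_eq hfacet)
  have hcentroid : (univ.erase i).centroid ℝ b = (univ.erase i').centroid ℝ b' :=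
    centroid_eq_of_inj_on_of_image_eq ℝ _ _ (fun _ _ _ _ h => b.ind.injective h)
      (fun _ _ _ _ h => b'.ind.injective h) (by simpa [compl_eq_univ_sdiff] using hfacet)
  obtain ⟨ε, hε, hε'⟩ := ((b.eventually_lineMap_centroid_erase_mem_interior
    (by simp [b.coord_apply_eq] : 0 < b.coord i (b i))).and
    (hcentroid ▸ b'.eventually_lineMap_centroid_erase_mem_interior hpos)).exists
  exact (Set.eq_empty_iff_forall_notMem.1 hdisj) _ ⟨hε, hε'⟩

end AffineBasis

theorem Function.Injective.exists_perm_eq_comp {α β : Type*} {f g : α → β}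
    (hf : Function.Injective f) (hg : Function.Injective g) (h : range f = range g) :
    ∃ σ : Perm α, f = g ∘ σ :=
  ⟨(ofInjective f hf).trans ((setCongr h).trans (ofInjective g hg).symm), funext fun k =>
    (congrArg Subtype.val
      (apply_symm_apply (ofInjective g hg) ⟨f k, h ▸ mem_range_self k⟩)).symm⟩

noncomputable def AffineIndependent.toAffineBasis {k : Type*} [Field k] {n : ℕ}
    {u : Fin (n + 1) → Fin n → k} (hu : AffineIndependent k u) :
    AffineBasis (Fin (n + 1)) k (Fin n → k) :=
  ⟨u, hu, by simp [hu.affineSpan_eq_top_iff_card_eq_finrank_add_one]⟩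

@[simp]
theorem AffineIndependent.coe_toAffineBasis {k : Type*} [Field k] {n : ℕ}
    {u : Fin (n + 1) → Fin n → k} (hu : AffineIndependent k u) : ⇑hu.toAffineBasis = u :=
  rfl

theorem Int.units_eq_neg_of_mul_eq {e f s s' : ℤˣ} {D D' c : ℝ} (hD : 0 < (s : ℝ) * D)
    (hD' : 0 < (s' : ℝ) * D') (hc : c < 0) (h : (e : ℝ) * D = f * (c * D')) :
    e * s = -(f * s') := by
  rcases Int.units_eq_one_or e with rfl | rfl <;> rcases Int.units_eq_one_or f with rfl | rfl <;>
    rcases Int.units_eq_one_or s with rfl | rfl <;> rcases Int.units_eq_one_or s' with rfl | rfl <;>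
    simp at hD hD' h ⊢ <;> nlinarith

theorem stmt1_general {m : ℕ} (K K' : OSimplex (Fin (m + 1) → ℝ) (m + 1))
    (hK : AffineIndependent ℝ K.vert) (hK' : AffineIndependent ℝ K'.vert)
    (hnatK : NaturallyOriented K) (hnatK' : NaturallyOriented K')
    (hdisj : interior (convexHull ℝ (Set.range K.vert)) ∩
      interior (convexHull ℝ (Set.range K'.vert)) = ∅) :
    ∀ i i', Set.range (K.facet i).vert = Set.range (K'.facet i').vert →
      OSimplex.ConsistentAt K K' (Set.range (K.facet i).vert) := by
  intro i i' hrange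
  obtain ⟨σ, hσ⟩ :=
    (hK.injective.comp (Fin.succAbove_right_injective (p := i))).exists_perm_eq_comp
      (hK'.injective.comp Fin.succAbove_right_injective) hrange
  have hneg : hK'.toAffineBasis.coord i' (K.vert i) < 0 :=
    AffineBasis.coord_apply_neg_of_image_compl_eq (b := hK.toAffineBasis)
      (by simpa [OSimplex.facet, range_comp, Fin.range_succAbove] using hrange) hdisj
  have hdet := neg_one_pow_mul_augmentedDet_eq (u := K.vert)
    (v := Function.update hK'.toAffineBasis i' (K.vert i)) (i := i) (j := i') (σ := σ)
    (by simp) (by rw [hσ]; ext; simp)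
  rw [AffineBasis.augmentedDet_update hK'.toAffineBasis] at hdet
  have hK_pos : 0 < ((K.sign : ℤ) : ℝ) * augmentedDet K.vert := by
    rwa [augmentedDet_eq_det_sub]
  have hK'_pos : 0 < ((K'.sign : ℤ) : ℝ) * augmentedDet hK'.toAffineBasis := by
    rwa [hK'.coe_toAffineBasis, augmentedDet_eq_det_sub]
  refine ⟨i, i', rfl, hrange.symm, σ, hσ, ?_⟩
  have := Int.units_eq_neg_of_mul_eq (e := (-1) ^ (i : ℕ)) (f := Perm.sign σ * (-1) ^ (i' : ℕ))
    hK_pos hK'_pos hneg (by push_cast; linear_combination hdet)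
  simpa [OSimplex.facet, OSimplex.opp, mul_assoc] using this

/-- Two naturally oriented `n`-simplices in `ℝ^n` (`n = m + 1`) that share
a facet but have disjoint interiors are consistently oriented: they induce opposite
orientations on any common facet. -/
theorem stmt1 {m : ℕ} (K K' : OSimplex (Fin (m + 1) → ℝ) (m + 1))
    (hK : AffineIndependent ℝ K.vert) (hK' : AffineIndependent ℝ K'.vert)
    (hnatK : NaturallyOriented K) (hnatK' : NaturallyOriented K')
    (hshare : ∃ i i', Set.range (K.facet i).vert = Set.range (K'.facet i').vert)
    (hdisj : interior (convexHull ℝ (Set.range K.vert)) ∩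
      interior (convexHull ℝ (Set.range K'.vert)) = ∅) :
    ∀ i i', Set.range (K.facet i).vert = Set.range (K'.facet i').vert →
      OSimplex.ConsistentAt K K' (Set.range (K.facet i).vert) :=
  stmt1_general K K' hK hK' hnatK hnatK' hdisj
end

section
/- If a triangulation M is non-branching, then the boundary of its boundary is empty: ∂∂M = ∅. -/
/-!
Let `G ∈ ∂∂M`. The simplices of `M` containing `G` are `G ∪ e` for the edges `e` of a finite
graph on vertices outside `G`, the link of `G`. The degree of a vertex `a` of the link is the
number of cofaces of the facet `insert a G`, which is at most `2` by non-branching and equals `1`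
exactly when `insert a G ∈ ∂M`. Since `G` lies in exactly one facet of `∂M`, the link has exactly
one vertex of odd degree, contradicting the handshake lemma.
-/

/-- The boundary of a triangulation: the facets incident to exactly one element. -/
def triBdry {V : Type*} (M : Set (Finset V)) : Set (Finset V) :=
  {F | ∃! K, K ∈ M ∧ F ⊆ K ∧ F.card + 1 = K.card}

namespace Finset

theorem even_card_odd_degree {α ι : Type*} [DecidableEq α] (E : Finset ι)
    (e : ι → Finset α) (he : ∀ i ∈ E, Even #(e i)) :
    Even #{a ∈ E.biUnion e | Odd #{i ∈ E | a ∈ e i}} := by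
  rw [← even_sum_iff_even_card_odd]
  have hdouble : ∑ a ∈ E.biUnion e, #{i ∈ E | a ∈ e i} = ∑ i ∈ E, #(e i) := by
    refine (sum_card_bipartiteAbove_eq_sum_card_bipartiteBelow (r := fun a i => a ∈ e i)).trans
      (sum_congr rfl fun i hi => ?_)
    rw [bipartiteBelow, filter_mem_eq_inter, inter_eq_right.2 (subset_biUnion_of_mem e hi)]
  rw [hdouble]
  exact even_sum _ he

end Finset

section BoundaryOfBoundary

open Finset

variable {V : Type*}

def cofaces (M : Set (Finset V)) (F : Finset V) : Set (Finset V) :=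
  {K | K ∈ M ∧ F ⊆ K ∧ F.card + 1 = K.card}

theorem mem_triBdry_iff_encard_cofaces {M : Set (Finset V)} {F : Finset V} :
    F ∈ triBdry M ↔ (cofaces M F).encard = 1 := by
  rw [Set.encard_eq_one]
  exact exists_congr fun K => (Set.eq_singleton_iff_unique_mem (s := cofaces M F)).symm

variable [DecidableEq V] {M : Finset (Finset V)} {G : Finset V} {a : V}

theorem coe_filter_mem_sdiff_eq_cofaces_insert (hdim : ∀ K ∈ M, #K = #G + 2) (ha : a ∉ G) :
    (↑{K ∈ {K ∈ M | G ⊆ K} | a ∈ K \ G} : Set (Finset V)) =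
      cofaces (M : Set (Finset V)) (insert a G) := by
  ext K
  simp only [coe_filter, mem_filter, Set.mem_ofPred_eq, cofaces, mem_sdiff, insert_subset_iff,
    card_insert_of_notMem ha, mem_coe]
  constructor
  · rintro ⟨⟨hK, hGK⟩, haK, -⟩
    exact ⟨hK, ⟨haK, hGK⟩, (hdim K hK).symm⟩
  · rintro ⟨hK, ⟨haK, hGK⟩, -⟩
    exact ⟨⟨hK, hGK⟩, haK, ha⟩

theorem odd_card_link_degree_iff (hdim : ∀ K ∈ M, #K = #G + 2)
    (hnb : ∀ F, (cofaces (M : Set (Finset V)) F).encard ≤ 2) (ha : a ∉ G) :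
    Odd #{K ∈ {K ∈ M | G ⊆ K} | a ∈ K \ G} ↔ insert a G ∈ triBdry (M : Set (Finset V)) := by
  have hle := hnb (insert a G)
  rw [mem_triBdry_iff_encard_cofaces, ← coe_filter_mem_sdiff_eq_cofaces_insert hdim ha,
    Set.encard_coe_eq_coe_finsetCard] at *
  norm_cast at *
  generalize #{K ∈ {K ∈ M | G ⊆ K} | a ∈ K \ G} = d at *
  interval_cases d <;> decide

theorem notMem_triBdry_triBdry (hdim : ∀ K ∈ M, #K = #G + 2)
    (hnb : ∀ F, (cofaces (M : Set (Finset V)) F).encard ≤ 2) :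
    G ∉ triBdry (triBdry (M : Set (Finset V))) := by
  rintro ⟨F₀, ⟨hF₀, hGF₀, hcardF₀⟩, huniq⟩
  obtain ⟨a₀, ha₀G, rfl⟩ := exists_eq_insert_iff.2 ⟨hGF₀, hcardF₀⟩
  set star := {K ∈ M | G ⊆ K}
  have hodd : {a ∈ star.biUnion (· \ G) | Odd #{K ∈ star | a ∈ K \ G}} = {a₀} := by
    ext a
    simp only [mem_filter, mem_biUnion, mem_singleton]
    constructor
    · rintro ⟨⟨K, -, haK⟩, hodd⟩
      have ha : a ∉ G := (mem_sdiff.1 haK).2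
      have hbd := (odd_card_link_degree_iff hdim hnb ha).1 hodd
      exact (insert_inj ha).1 (huniq _ ⟨hbd, subset_insert _ _, (card_insert_of_notMem ha).symm⟩)
    · rintro rfl
      refine ⟨?_, (odd_card_link_degree_iff hdim hnb ha₀G).2 hF₀⟩
      obtain ⟨K₀, ⟨hK₀, hFK₀, -⟩, -⟩ := hF₀
      exact ⟨K₀, mem_filter.2 ⟨hK₀, (subset_insert _ _).trans hFK₀⟩,
        mem_sdiff.2 ⟨hFK₀ (mem_insert_self _ _), ha₀G⟩⟩
  have heven := even_card_odd_degree star (· \ G) fun K hK => by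
    rw [card_sdiff_of_subset (mem_filter.1 hK).2, hdim K (mem_filter.1 hK).1]
    simp
  rw [hodd, card_singleton] at heven
  exact Nat.not_even_one heven

end BoundaryOfBoundary

theorem stmt2_general {V : Type*} {n : ℕ} (M : Set (Finset V)) (hfin : M.Finite)
    (hcard : ∀ K ∈ M, K.card = n + 1)
    (hnb : ∀ F : Finset V, {K | K ∈ M ∧ F ⊆ K ∧ F.card + 1 = K.card}.encard ≤ 2) :
    triBdry (triBdry M) = ∅ := by
  classical
  lift M to Finset (Finset V) using hfin
  refine Set.eq_empty_of_forall_notMem fun G hG => notMem_triBdry_triBdry (fun K hK => ?_) hnb hG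
  obtain ⟨F, ⟨⟨K₀, ⟨hK₀, -, hcardK₀⟩, -⟩, -, hcardF⟩, -⟩ := hG
  rw [hcard K hK, ← hcard K₀ hK₀]
  omega

/-- If an `n`-dimensional triangulation `M` (`n ≥ 1`) is non-branching
(every facet is incident to at most two elements), then the boundary of its boundary is
empty: `∂∂M = ∅`. -/
theorem stmt2 {V : Type*} {n : ℕ} (hn : 1 ≤ n) (M : Set (Finset V)) (hfin : M.Finite)
    (hcard : ∀ K ∈ M, K.card = n + 1)
    (hnb : ∀ F : Finset V, {K | K ∈ M ∧ F ⊆ K ∧ F.card + 1 = K.card}.encard ≤ 2) :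
    triBdry (triBdry M) = ∅ :=
  stmt2_general M hfin hcard hnb
end

section
/- Every orientable triangulation is non-branching: if a triangulation admits a compatible orientation, then each of its facets is incident to at most two elements. -/
section Aux

open OSimplex

variable {V : Type*} {d : ℕ}

lemma inj_of_range {n : ℕ} {f : Fin n → V} {K : Finset V} [DecidableEq V]
    (h : Set.range f = ↑K) (hc : K.card = n) : Function.Injective f := by
  have himg : Finset.univ.image f = K := by
    apply Finset.coe_injective
    rw [Finset.coe_image, Finset.coe_univ, Set.image_univ, h]
  have hinj := Finset.injOn_of_card_image_eq (s := Finset.univ)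
    (by rw [himg, hc, Finset.card_univ, Fintype.card_fin])
  exact fun a b hab => hinj (Finset.mem_univ a) (Finset.mem_univ b) hab

lemma facet_index_unique (s : OSimplex V (d + 1)) (hinj : Function.Injective s.vert)
    {F : Set V} {j j' : Fin (d + 2)}
    (h : Set.range (s.facet j).vert = F) (h' : Set.range (s.facet j').vert = F) : j = j' := by
  have key : ∀ i : Fin (d + 2), s.vert i ∉ F → i = j := by
    intro i hi
    by_contra hne
    obtain ⟨z, hz⟩ := Fin.exists_succAbove_eq hne
    exact hi (h ▸ ⟨z, by simp [facet, hz]⟩)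
  have hj' : s.vert j' ∉ F := by
    rw [← h']
    rintro ⟨z, hz⟩
    exact j'.succAbove_ne z (hinj hz)
  exact (key j' hj').symm

lemma no_three (f g h : OSimplex V d) (hinj : Function.Injective h.vert)
    (h12 : f.Equiv' g.opp) (h13 : f.Equiv' h.opp) (h23 : g.Equiv' h.opp) : False := by
  obtain ⟨σ, hσv, hσs⟩ := h12
  obtain ⟨τ, hτv, hτs⟩ := h13
  obtain ⟨ρ, hρv, hρs⟩ := h23
  simp only [opp] at hσv hτv hρv hσs hτs hρs
  have hcomp : τ = ρ * σ := Equiv.ext fun x => hinj <| by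
    have h1 : f.vert x = g.vert (σ x) := congrFun hσv x
    have h2 : f.vert x = h.vert (τ x) := congrFun hτv x
    have h3 : g.vert (σ x) = h.vert (ρ (σ x)) := congrFun hρv (σ x)
    simpa using (h2.symm.trans (h1.trans h3))
  have e1 : f.sign = Equiv.Perm.sign σ * Equiv.Perm.sign ρ * h.sign := by
    rw [hσs, hρs]
    simp [mul_assoc]
  have e2 : f.sign = -(Equiv.Perm.sign σ * Equiv.Perm.sign ρ * h.sign) := by
    rw [hτs, hcomp, map_mul]
    simp [mul_assoc, mul_comm, mul_left_comm]
  have hx := e1.symm.trans e2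
  have : ((Equiv.Perm.sign σ * Equiv.Perm.sign ρ * h.sign : ℤˣ) : ℤ)
      = -((Equiv.Perm.sign σ * Equiv.Perm.sign ρ * h.sign : ℤˣ) : ℤ) := by
    exact_mod_cast congrArg Units.val hx
  have h0 : ((Equiv.Perm.sign σ * Equiv.Perm.sign ρ * h.sign : ℤˣ) : ℤ) ≠ 0 := Units.ne_zero _
  omega

end Aux
/-- Every orientable triangulation is non-branching: if an `n`-dimensional
triangulation (`n = d + 1`) admits a compatible orientation (adjacent elements induce
opposite orientations on their common facet), then each of its facets is incident to at most
two elements. -/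
theorem stmt3 {V : Type*} [DecidableEq V] {d : ℕ} (M : Set (Finset V)) (hfin : M.Finite)
    (hcard : ∀ K ∈ M, K.card = d + 2)
    (o : Finset V → OSimplex V (d + 1))
    (ho : ∀ K ∈ M, Set.range (o K).vert = (K : Set V))
    (hcompat : ∀ K ∈ M, ∀ K' ∈ M, K ≠ K' → (K ∩ K').card = d + 1 →
      OSimplex.ConsistentAt (o K) (o K') ((K ∩ K' : Finset V) : Set V)) :
    ∀ F : Finset V, {K | K ∈ M ∧ F ⊆ K ∧ F.card + 1 = K.card}.encard ≤ 2 := by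
  intro F
  by_contra hc
  push_neg at hc
  set S := {K | K ∈ M ∧ F ⊆ K ∧ F.card + 1 = K.card} with hS
  obtain ⟨K1, K2, hK1, hK2, hne12⟩ := Set.one_lt_encard_iff.1 ((by norm_num : (1:ℕ∞) < 2).trans hc)
  have hsub : ¬ (S ⊆ {K1, K2}) := by
    intro hs
    exact absurd ((Set.encard_mono hs).trans_eq (Set.encard_pair hne12)) (not_le.2 hc)
  obtain ⟨K3, hK3, hK3'⟩ := Set.not_subset.1 hsub
  simp only [Set.mem_insert_iff, Set.mem_singleton_iff, not_or] at hK3'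
  obtain ⟨hne31, hne32⟩ := hK3'
  have hFc : F.card = d + 1 := by
    have h1 := hK1.2.2
    rw [hcard K1 hK1.1] at h1
    omega
  have hinj : ∀ K ∈ M, Function.Injective (o K).vert := fun K hK =>
    inj_of_range (ho K hK) (hcard K hK)
  have inter : ∀ {A B : Finset V}, A ∈ S → B ∈ S → A ≠ B →
      A ∩ B = F ∧ (A ∩ B).card = d + 1 := by
    intro A B hA hB hne
    have hFsub : F ⊆ A ∩ B := Finset.subset_inter hA.2.1 hB.2.1
    have hcarAB : (A ∩ B).card ≤ d + 1 := by
      by_contra hgt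
      push_neg at hgt
      have hAB : A ∩ B = A := Finset.eq_of_subset_of_card_le Finset.inter_subset_left
        (by rw [hcard A hA.1]; omega)
      have hABs : A ⊆ B := by rw [← hAB]; exact Finset.inter_subset_right
      exact hne (Finset.eq_of_subset_of_card_le hABs
        (by rw [hcard A hA.1, hcard B hB.1]))
    have hFeq : F = A ∩ B := Finset.eq_of_subset_of_card_le hFsub (by omega)
    refine ⟨hFeq.symm, ?_⟩
    rw [← hFeq, hFc]
  have c12 := hcompat K1 hK1.1 K2 hK2.1 hne12 (inter hK1 hK2 hne12).2
  have c13 := hcompat K1 hK1.1 K3 hK3.1 (Ne.symm hne31) (inter hK1 hK3 (Ne.symm hne31)).2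
  have c23 := hcompat K2 hK2.1 K3 hK3.1 (Ne.symm hne32) (inter hK2 hK3 (Ne.symm hne32)).2
  rw [(inter hK1 hK2 hne12).1] at c12
  rw [(inter hK1 hK3 (Ne.symm hne31)).1] at c13
  rw [(inter hK2 hK3 (Ne.symm hne32)).1] at c23
  obtain ⟨j1, j2, hr1, hr2, he12⟩ := c12
  obtain ⟨j1', j3, hr1', hr3, he13⟩ := c13
  obtain ⟨j2', j3', hr2', hr3', he23⟩ := c23
  have ej1 : j1' = j1 := facet_index_unique (o K1) (hinj K1 hK1.1) hr1' hr1
  have ej2 : j2' = j2 := facet_index_unique (o K2) (hinj K2 hK2.1) hr2' hr2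
  have ej3 : j3' = j3 := facet_index_unique (o K3) (hinj K3 hK3.1) hr3' hr3
  rw [ej1] at he13
  rw [ej2, ej3] at he23
  have hinj3 : Function.Injective ((o K3).facet j3).vert :=
    (hinj K3 hK3.1).comp Fin.succAbove_right_injective
  exact no_three _ _ _ hinj3 he12 he13 he23
end

section
/- Let M* be a generalized mesh and suppose elements k and k' are adjacent (through some facet F). Then there exist n distinct generalized vertices belonging to both k and k'. -/
/-- A generalized mesh: a type of elements, a realization function assigning to each element
a simplex (a finite set of vertices), and a neighbor function encoding the adjacency graph
between split facets (each split facet `(F, k)` has at most one neighbor). -/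
structure GenMesh (V : Type*) (n : ℕ) where
  Elem : Type*
  real : Elem → Finset V
  nbr : Elem → Finset V → Option Elem

namespace GenMesh

variable {V : Type*} {n : ℕ}

/-- The axioms of an `n`-dimensional generalized mesh: finitely many elements, each realized
as an `n`-simplex; the adjacency graph is symmetric, two adjacent split facets share the same
facet, belong to distinct elements, and each split facet has at most one neighbor. -/
def IsValid (M : GenMesh V n) : Prop :=
  Finite M.Elem ∧ (∀ k, (M.real k).card = n + 1) ∧
    ∀ k F k', M.nbr k F = some k' →
      k' ≠ k ∧ M.nbr k' F = some k ∧ F ⊆ M.real k ∧ F ⊆ M.real k' ∧ F.card = n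

end GenMesh
/-- `k` and `k'` lie in the same connected component of the graph `G(S)` on the generalized
star of `S`: they are linked by a chain of elements, consecutive ones being adjacent through
a facet containing `S`. -/
def inSameComp {V : Type*} {n : ℕ} (M : GenMesh V n) (S : Set V) (k k' : M.Elem) : Prop :=
  Relation.ReflTransGen
    (fun a b => ∃ G : Finset V, S ⊆ (G : Set V) ∧
      (M.nbr a G = some b ∨ M.nbr b G = some a)) k k'
/-- If two elements `k`, `k'` of an `n`-dimensional generalized mesh are
adjacent (through some facet `F`), then there exist `n` distinct generalized vertices
belonging to both `k` and `k'`: the `n` vertices of `F`, each with the component of the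
graph on its generalized star containing both `k` and `k'`. -/
theorem stmt12 {V : Type*} {n : ℕ} (M : GenMesh V n) (hM : M.IsValid) (k k' : M.Elem)
    (F : Finset V) (hadj : M.nbr k F = some k') :
    ∃ vs : Fin n → V, Function.Injective vs ∧
      ∀ i, vs i ∈ F ∧ vs i ∈ M.real k ∧ vs i ∈ M.real k' ∧
        inSameComp M {vs i} k k' := by
  obtain ⟨hfin, hcard, hax⟩ := hM
  obtain ⟨hne, hsym, hFk, hFk', hFn⟩ := hax k F k' hadj
  let e : Fin n ≃ {x // x ∈ F} := (finCongr hFn.symm).trans F.equivFin.symm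
  refine ⟨fun i => (e i : V), fun a b hab => e.injective (Subtype.ext hab), fun i => ?_⟩
  have hmem : (e i : V) ∈ F := (e i).2
  exact ⟨hmem, hFk hmem, hFk' hmem,
    Relation.ReflTransGen.single ⟨F, by simp [hmem], Or.inl hadj⟩⟩
end

section
/- Whitney forms on a generalized mesh satisfy the patch condition: if elements k and k' of a generalized mesh M* are adjacent through a facet F, then for every Whitney d-form ω ∈ Λ^d(M*), the traces (pullbacks along the inclusion) of ω^k and ω^{k'} to |F| coincide. -/
open Classical in
/-- Evaluation of the Whitney `d`-form associated to the generalized `d`-subfacet with vertex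
ordering `Vs` and component `γ`: on an element `k ∈ γ` it is the alternating sum
`∑_j (-1)^j λ_{V_j} dλ_{V_0} ∧ … ∧ d̂λ_{V_j} ∧ … ∧ dλ_{V_d}`, evaluated at the point `x` on
the tuple of vectors `v`; on elements outside `γ` it vanishes. -/
noncomputable def whitneyEval {m n : ℕ} (M : GenMesh (Fin m → ℝ) n)
    (lam : M.Elem → (Fin m → ℝ) → ((Fin m → ℝ) →ᵃ[ℝ] ℝ)) {d : ℕ}
    (Vs : Fin (d + 1) → (Fin m → ℝ)) (γ : Set M.Elem) (k : M.Elem) (x : Fin m → ℝ)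
    (v : Fin d → (Fin m → ℝ)) : ℝ :=
  if k ∈ γ then
    ∑ j : Fin (d + 1), (-1 : ℝ) ^ (j : ℕ) * lam k (Vs j) x *
      Matrix.det (Matrix.of fun a b : Fin d => (lam k (Vs (j.succAbove a))).linear (v b))
  else 0

/-- The space `Λ^d(M)` of Whitney `d`-forms on a generalized mesh: the span of the Whitney
forms associated to the generalized `d`-subfacets of `M`. -/
noncomputable def whitneyForms {m n : ℕ} (M : GenMesh (Fin m → ℝ) n)
    (lam : M.Elem → (Fin m → ℝ) → ((Fin m → ℝ) →ᵃ[ℝ] ℝ)) (d : ℕ) :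
    Submodule ℝ (M.Elem → (Fin m → ℝ) → (Fin d → (Fin m → ℝ)) → ℝ) :=
  Submodule.span ℝ
    {w | ∃ (Vs : Fin (d + 1) → (Fin m → ℝ)) (k₀ : M.Elem), Function.Injective Vs ∧
      (∀ j, Vs j ∈ M.real k₀) ∧
      w = fun k x v => whitneyEval M lam Vs {kk | inSameComp M (Set.range Vs) k₀ kk} k x v}

open Classical in
/-- `lam k v` is the barycentric coordinate function of the simplex attached to `k`
associated with its vertex `v`. -/
def IsBary {m n : ℕ} (M : GenMesh (Fin m → ℝ) n)
    (lam : M.Elem → (Fin m → ℝ) → ((Fin m → ℝ) →ᵃ[ℝ] ℝ)) : Prop :=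
  ∀ k, ∀ v ∈ M.real k, ∀ w ∈ M.real k, lam k v w = if v = w then (1 : ℝ) else 0

/-- Every element of the generalized mesh is realized as a non-degenerate simplex. -/
def GoodSimplices {m n : ℕ} (M : GenMesh (Fin m → ℝ) n) : Prop :=
  ∀ k, AffineIndependent ℝ (fun v : {x // x ∈ M.real k} => (v : Fin m → ℝ))

/-! On `|F|` the Whitney form of a subfacet `S` only sees the restrictions of the barycentric
coordinates of the vertices of `S`, and these restrictions are the barycentric coordinates of
`F` itself, hence the same seen from `k` and from `k'`. If `S ⊆ F`, adjacency through `F` puts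
`k` and `k'` in the same component of `G(S)`, so both traces are given by this same formula or
both vanish. If some vertex of `S` lies off `F`, its barycentric coordinate vanishes on `|F|`;
every term of the Whitney form then contains either that coordinate or its differential, so
both traces are zero. -/

section WhitneySum

variable {E : Type*} [AddCommGroup E] [Module ℝ E] {d : ℕ}

noncomputable def whitneySum (f : Fin (d + 1) → E →ᵃ[ℝ] ℝ) (x : E) (v : Fin d → E) : ℝ :=
  ∑ j : Fin (d + 1), (-1 : ℝ) ^ (j : ℕ) * f j x *
    Matrix.det (Matrix.of fun a b : Fin d => (f (j.succAbove a)).linear (v b))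

variable {f g : Fin (d + 1) → E →ᵃ[ℝ] ℝ} {s : Set E} {x : E} {v : Fin d → E}

theorem whitneySum_congr_of_eqOn (h : ∀ j, Set.EqOn (f j) (g j) s)
    (hx : x ∈ convexHull ℝ s) (hv : ∀ i, v i ∈ vectorSpan ℝ s) :
    whitneySum f x v = whitneySum g x v := by
  refine Finset.sum_congr rfl fun j _ => ?_
  have hxj : f j x = g j x :=
    AffineMap.eqOn_affineSpan (h j) (convexHull_subset_affineSpan s hx)
  have hdet : (Matrix.of fun a b : Fin d => (f (j.succAbove a)).linear (v b)) =
      Matrix.of fun a b : Fin d => (g (j.succAbove a)).linear (v b) := by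
    ext a b
    exact AffineMap.linear_eqOn_vectorSpan (h _) (hv b)
  rw [hxj, hdet]

theorem whitneySum_eq_zero_of_eqOn_zero {j₀ : Fin (d + 1)}
    (h : Set.EqOn (f j₀) ⇑(0 : E →ᵃ[ℝ] ℝ) s)
    (hx : x ∈ convexHull ℝ s) (hv : ∀ i, v i ∈ vectorSpan ℝ s) :
    whitneySum f x v = 0 := by
  refine Finset.sum_eq_zero fun j _ => ?_
  rcases eq_or_ne j j₀ with rfl | hj
  · have hx0 : f j x = 0 := by
      simpa using AffineMap.eqOn_affineSpan h (convexHull_subset_affineSpan s hx)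
    rw [hx0, mul_zero, zero_mul]
  · obtain ⟨a, ha⟩ := Fin.exists_succAbove_eq hj.symm
    have hrow : ∀ b, (Matrix.of fun a b : Fin d => (f (j.succAbove a)).linear (v b)) a b = 0 :=
      fun b => by simpa [ha] using AffineMap.linear_eqOn_vectorSpan h (hv b)
    rw [Matrix.det_eq_zero_of_row_eq_zero a hrow, mul_zero]

end WhitneySum

section Mesh

variable {V : Type*} {n : ℕ} {M : GenMesh V n} {S : Set V} {k₀ k k' : M.Elem}

theorem inSameComp.subset_real (hM : M.IsValid) (h : inSameComp M S k₀ k)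
    (h₀ : S ⊆ M.real k₀) : S ⊆ M.real k := by
  induction h with
  | refl => exact h₀
  | tail _ hstep =>
    obtain ⟨G, hSG, hadj | hadj⟩ := hstep
    · exact hSG.trans (Finset.coe_subset.mpr (hM.2.2 _ _ _ hadj).2.2.2.1)
    · exact hSG.trans (Finset.coe_subset.mpr (hM.2.2 _ _ _ hadj).2.2.1)

theorem inSameComp_iff_of_nbr_eq {F : Finset V} (hSF : S ⊆ F) (hadj : M.nbr k F = some k') :
    inSameComp M S k₀ k ↔ inSameComp M S k₀ k' :=
  ⟨fun h => h.tail ⟨F, hSF, Or.inl hadj⟩, fun h => h.tail ⟨F, hSF, Or.inr hadj⟩⟩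

end Mesh

section Barycentric

variable {m n : ℕ} {M : GenMesh (Fin m → ℝ) n}
  {lam : M.Elem → (Fin m → ℝ) → ((Fin m → ℝ) →ᵃ[ℝ] ℝ)} {F : Finset (Fin m → ℝ)}
  {u : Fin m → ℝ}

theorem IsBary.eqOn_zero_of_notMem (hlam : IsBary M lam) {k : M.Elem} (hFk : F ⊆ M.real k)
    (hu : u ∈ M.real k) (huF : u ∉ F) : Set.EqOn (lam k u) ⇑(0 : (Fin m → ℝ) →ᵃ[ℝ] ℝ) F := by
  intro w hw
  rw [hlam k u hu w (hFk hw), if_neg (ne_of_mem_of_not_mem hw huF).symm]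
  rfl

theorem IsBary.eqOn_of_mem (hlam : IsBary M lam) {k k' : M.Elem} (hFk : F ⊆ M.real k)
    (hFk' : F ⊆ M.real k') (hu : u ∈ M.real k) (hu' : u ∈ M.real k') :
    Set.EqOn (lam k u) (lam k' u) F := fun w hw => by
  rw [hlam k u hu w (hFk hw), hlam k' u hu' w (hFk' hw)]

end Barycentric

section WhitneyEval

open Classical

variable {m n d : ℕ} {M : GenMesh (Fin m → ℝ) n}
  {lam : M.Elem → (Fin m → ℝ) → ((Fin m → ℝ) →ᵃ[ℝ] ℝ)} {Vs : Fin (d + 1) → (Fin m → ℝ)}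
  {γ : Set M.Elem} {F : Finset (Fin m → ℝ)} {x : Fin m → ℝ} {v : Fin d → (Fin m → ℝ)}

theorem whitneyEval_eq_ite (k : M.Elem) :
    whitneyEval M lam Vs γ k x v =
      if k ∈ γ then whitneySum (fun j => lam k (Vs j)) x v else 0 :=
  rfl

theorem whitneyEval_eq_zero_of_notMem (hlam : IsBary M lam)
    (hγ : ∀ c ∈ γ, ∀ j, Vs j ∈ M.real c) {k : M.Elem} (hFk : F ⊆ M.real k)
    {j₀ : Fin (d + 1)} (hj₀ : Vs j₀ ∉ F) (hx : x ∈ convexHull ℝ (F : Set (Fin m → ℝ)))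
    (hv : ∀ i, v i ∈ vectorSpan ℝ (F : Set (Fin m → ℝ))) :
    whitneyEval M lam Vs γ k x v = 0 := by
  rw [whitneyEval_eq_ite]
  split_ifs with hk
  · exact whitneySum_eq_zero_of_eqOn_zero
      (hlam.eqOn_zero_of_notMem hFk (hγ k hk j₀) hj₀) hx hv
  · rfl

theorem whitneyEval_eq_of_nbr_eq (hM : M.IsValid) (hlam : IsBary M lam)
    {k₀ k k' : M.Elem} (hVs : ∀ j, Vs j ∈ M.real k₀) (hadj : M.nbr k F = some k')
    (hx : x ∈ convexHull ℝ (F : Set (Fin m → ℝ)))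
    (hv : ∀ i, v i ∈ vectorSpan ℝ (F : Set (Fin m → ℝ))) :
    whitneyEval M lam Vs {c | inSameComp M (Set.range Vs) k₀ c} k x v =
      whitneyEval M lam Vs {c | inSameComp M (Set.range Vs) k₀ c} k' x v := by
  obtain ⟨-, -, hFk, hFk', -⟩ := hM.2.2 k F k' hadj
  have hγ : ∀ c ∈ {c | inSameComp M (Set.range Vs) k₀ c}, ∀ j, Vs j ∈ M.real c :=
    fun c hc j => hc.subset_real hM (Set.range_subset_iff.mpr hVs) ⟨j, rfl⟩
  by_cases hSF : ∀ j, Vs j ∈ F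
  · have hkk' := inSameComp_iff_of_nbr_eq (k₀ := k₀) (Set.range_subset_iff.mpr hSF) hadj
    simp only [whitneyEval_eq_ite, Set.mem_ofPred_eq, hkk']
    split_ifs with hk'
    · exact whitneySum_congr_of_eqOn (fun j => hlam.eqOn_of_mem hFk hFk'
        (hγ k (hkk'.mpr hk') j) (hγ k' hk' j)) hx hv
    · rfl
  · obtain ⟨j₀, hj₀⟩ := not_forall.mp hSF
    rw [whitneyEval_eq_zero_of_notMem hlam hγ hFk hj₀ hx hv,
      whitneyEval_eq_zero_of_notMem hlam hγ hFk' hj₀ hx hv]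

end WhitneyEval

theorem stmt14_general {m n : ℕ} (M : GenMesh (Fin m → ℝ) n) (hM : M.IsValid)
    (lam : M.Elem → (Fin m → ℝ) → ((Fin m → ℝ) →ᵃ[ℝ] ℝ)) (hlam : IsBary M lam)
    (d : ℕ) (k k' : M.Elem) (F : Finset (Fin m → ℝ)) (hadj : M.nbr k F = some k')
    (ω : M.Elem → (Fin m → ℝ) → (Fin d → (Fin m → ℝ)) → ℝ)
    (hω : ω ∈ whitneyForms M lam d) :
    ∀ x ∈ convexHull ℝ (F : Set (Fin m → ℝ)), ∀ v : Fin d → (Fin m → ℝ),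
      (∀ i, v i ∈ vectorSpan ℝ (F : Set (Fin m → ℝ))) → ω k x v = ω k' x v := by
  intro x hx v hv
  induction hω using Submodule.span_induction with
  | mem w hw =>
    obtain ⟨Vs, k₀, -, hVs, rfl⟩ := hw
    exact whitneyEval_eq_of_nbr_eq hM hlam hVs hadj hx hv
  | zero => rfl
  | add a b _ _ ha hb => simp only [Pi.add_apply, ha, hb]
  | smul c a _ ha => simp only [Pi.smul_apply, smul_eq_mul, ha]

/-- patch condition. If elements `k` and `k'` of a generalized mesh `M`
(realized by non-degenerate simplices in `ℝ^m`, with barycentric coordinates `lam`) are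
adjacent through a facet `F`, then for every Whitney `d`-form `ω ∈ Λ^d(M)`, the traces of
`ω^k` and `ω^{k'}` on `|F|` coincide: they agree at every point of `|F|` on every tuple of
vectors tangent to `F`. -/
theorem stmt14 {m n : ℕ} (M : GenMesh (Fin m → ℝ) n) (hM : M.IsValid)
    (hgood : GoodSimplices M)
    (lam : M.Elem → (Fin m → ℝ) → ((Fin m → ℝ) →ᵃ[ℝ] ℝ)) (hlam : IsBary M lam)
    (d : ℕ) (k k' : M.Elem) (F : Finset (Fin m → ℝ)) (hadj : M.nbr k F = some k')
    (ω : M.Elem → (Fin m → ℝ) → (Fin d → (Fin m → ℝ)) → ℝ)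
    (hω : ω ∈ whitneyForms M lam d) :
    ∀ x ∈ convexHull ℝ (F : Set (Fin m → ℝ)), ∀ v : Fin d → (Fin m → ℝ),
      (∀ i, v i ∈ vectorSpan ℝ (F : Set (Fin m → ℝ))) → ω k x v = ω k' x v :=
  stmt14_general M hM lam hlam d k k' F hadj ω hω
end
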